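/- arXiv:1609.01427 — 2 statements merged into one kernel-verified Lean document; each statement's English description precedes it below -/
import Mathlib

section
/- Let X be a topological space, A ⊆ X a subset, x₀ ∈ A, and h : X → X a continuous map with h(a) = a for every a ∈ A. Let α, β : [0,1] → X be paths with α(1) = β(1) = x₀ and α(0), β(0) ∈ A, and suppose there exists a continuous map F : [0,1] × [0,1] → X with F(t,0) = α(t) and F(t,1) = β(t) for all t, F(0,τ) ∈ A for all τ, and F(1,τ) = x₀ for all τ (i.e., α and β are homotopic as relative loops of X modulo A based at x₀). Then the loops α⁻¹·(h∘α) and β⁻¹·(h∘β) based at x₀ are path-homotopic in X; hence the class of the relative variation loop in π₁(X, x₀) depends only on the relative homotopy class of α. -/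
open unitInterval

set_option maxHeartbeats 1000000

/-- If two relative loops `α, β` of `X` modulo `A` based at `x₀` are homotopic as relative
loops (via a homotopy `F` keeping the initial point in `A` and the final point at `x₀`), and
`h : X → X` is continuous and fixes `A` pointwise, then the relative variation loops
`α⁻¹·(h∘α)` and `β⁻¹·(h∘β)` are path-homotopic in `X`. -/
theorem stmt_0 {X : Type*} [TopologicalSpace X] (A : Set X) (x₀ : X) (hx₀ : x₀ ∈ A)
    (h : X → X) (hcont : Continuous h) (hfix : ∀ a ∈ A, h a = a)
    {a b : X} (ha : a ∈ A) (hb : b ∈ A)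
    (α : Path a x₀) (β : Path b x₀)
    (F : I × I → X) (hFcont : Continuous F)
    (hF0 : ∀ t, F (t, 0) = α t) (hF1 : ∀ t, F (t, 1) = β t)
    (hFA : ∀ τ, F (0, τ) ∈ A) (hFend : ∀ τ, F (1, τ) = x₀) :
    (α.symm.trans ((α.map hcont).cast (hfix a ha).symm (hfix x₀ hx₀).symm)).Homotopic
      (β.symm.trans ((β.map hcont).cast (hfix b hb).symm (hfix x₀ hx₀).symm)) := by
  set G : I × I → X := fun q =>
    if ((q.2 : ℝ)) ≤ 1/2 then
      F (Set.projIcc 0 1 zero_le_one (1 - 2 * (q.2 : ℝ)), q.1)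
    else
      h (F (Set.projIcc 0 1 zero_le_one (2 * (q.2 : ℝ) - 1), q.1)) with hG
  have hGcont : Continuous G := by
    apply Continuous.if_le
    · exact hFcont.comp (((continuous_projIcc.comp (by continuity)).prodMk continuous_fst))
    · exact hcont.comp (hFcont.comp
        (((continuous_projIcc.comp (by continuity)).prodMk continuous_fst)))
    · exact (continuous_subtype_val.comp continuous_snd)
    · exact continuous_const
    · intro q hq
      have h2 : (1 : ℝ) - 2 * (q.2 : ℝ) = 0 := by rw [hq]; ring
      have h3 : 2 * (q.2 : ℝ) - 1 = 0 := by rw [hq]; ring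
      rw [h2, h3]
      have : Set.projIcc (0:ℝ) 1 zero_le_one 0 = (0 : I) := by
        simp [Set.projIcc]
      rw [this]
      exact (hfix _ (hFA q.1)).symm
  constructor
  refine ⟨⟨⟨fun q => G q, hGcont⟩, ?_, ?_⟩, ?_⟩
  · -- at time 0 it is the first loop
    intro t
    simp only [hG, Path.coe_toContinuousMap, ContinuousMap.coe_mk]
    rw [Path.trans_apply]
    split_ifs with ht
    · have hmem : (1 : ℝ) - 2 * (t : ℝ) ∈ Set.Icc (0:ℝ) 1 := by
        constructor <;> [linarith; linarith [t.2.1]]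
      rw [Set.projIcc_of_mem _ hmem, hF0, Path.symm_apply]
      simp only [Function.comp_apply]
      congr 1
    · have hmem : 2 * (t : ℝ) - 1 ∈ Set.Icc (0:ℝ) 1 := by
        constructor <;> [linarith; linarith [t.2.2]]
      rw [Set.projIcc_of_mem _ hmem, hF0]
      rfl
  · -- at time 1 it is the second loop
    intro t
    simp only [hG, Path.coe_toContinuousMap, ContinuousMap.coe_mk]
    rw [Path.trans_apply]
    split_ifs with ht
    · have hmem : (1 : ℝ) - 2 * (t : ℝ) ∈ Set.Icc (0:ℝ) 1 := by
        constructor <;> [linarith; linarith [t.2.1]]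
      rw [Set.projIcc_of_mem _ hmem, hF1, Path.symm_apply]
      simp only [Function.comp_apply]
      congr 1
    · have hmem : 2 * (t : ℝ) - 1 ∈ Set.Icc (0:ℝ) 1 := by
        constructor <;> [linarith; linarith [t.2.2]]
      rw [Set.projIcc_of_mem _ hmem, hF1]
      rfl
  · -- fixed on endpoints
    intro τ t ht
    simp only [Set.mem_insert_iff, Set.mem_singleton_iff] at ht
    rcases ht with rfl | rfl
    · simp only [hG, Path.coe_toContinuousMap, ContinuousMap.coe_mk]
      have h05 : (((0:I)):ℝ) ≤ 1/2 := by norm_num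
      rw [if_pos h05]
      have e2 : Set.projIcc (0:ℝ) 1 zero_le_one ((1:ℝ) - 2 * ((0:I):ℝ)) = (1:I) := by
        have e1 : (1:ℝ) - 2 * ((0:I):ℝ) = 1 := by norm_num
        rw [e1, Set.projIcc_of_mem _ (by norm_num : (1:ℝ) ∈ Set.Icc (0:ℝ) 1)]
        rfl
      rw [e2, hFend]
      exact ((α.symm.trans ((α.map hcont).cast (hfix a ha).symm (hfix x₀ hx₀).symm)).source).symm
    · simp only [hG, Path.coe_toContinuousMap, ContinuousMap.coe_mk]
      have h15 : ¬ (((1:I)):ℝ) ≤ 1/2 := by norm_num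
      rw [if_neg h15]
      have e2 : Set.projIcc (0:ℝ) 1 zero_le_one (2 * ((1:I):ℝ) - 1) = (1:I) := by
        have e1 : 2 * ((1:I):ℝ) - 1 = 1 := by norm_num
        rw [e1, Set.projIcc_of_mem _ (by norm_num : (1:ℝ) ∈ Set.Icc (0:ℝ) 1)]
        rfl
      rw [e2, hFend]
      exact (hfix x₀ hx₀).trans
        ((α.symm.trans ((α.map hcont).cast (hfix a ha).symm (hfix x₀ hx₀).symm)).target).symm
end

section
/- Let Y be a topological space, X ⊆ Y a subspace, A ⊆ X a subset, and H : X × [0,1] → Y a continuous map with H(x,0) = x for every x ∈ X; set h := H(·,1) and assume h maps X into X and h(a) = a for every a ∈ A. Let x₀ ∈ A and let α : [0,1] → X be a path with a := α(0) ∈ A and α(1) = x₀. If the trace loops τ ↦ H(a,τ) (a loop at a) and τ ↦ H(x₀,τ) (a loop at x₀) are both null-homotopic in Y, then the relative variation loop α⁻¹·(h∘α), a loop in X based at x₀, is null-homotopic in Y; equivalently, its homotopy class lies in the kernel of the inclusion-induced homomorphism π₁(X, x₀) → π₁(Y, x₀). -/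
/-!
`H` is a homotopy from the inclusion `X → Y` to `h`. Its naturality square along `α` says that
`α` followed by the trace of `x₀` is homotopic to the trace of `a` followed by `h ∘ α`; when both
traces are null-homotopic this makes `α` and `h ∘ α` homotopic rel endpoints in `Y`, so
`α⁻¹ · (h ∘ α)` is null-homotopic.
-/

open unitInterval

theorem Path.Homotopic.of_trans_homotopic_trans {Z : Type*} [TopologicalSpace Z] {a b : Z}
    {p q : Path a b} {ω₁ : Path a a} {ω₂ : Path b b}
    (h : (p.trans ω₂).Homotopic (ω₁.trans q))
    (h₁ : ω₁.Homotopic (Path.refl a)) (h₂ : ω₂.Homotopic (Path.refl b)) :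
    p.Homotopic q := by
  rw [← Quotient.eq] at h h₁ h₂ ⊢
  simpa [h₁, h₂] using h

theorem ContinuousMap.Homotopy.map_homotopic_of_evalAt_null {X Y : Type*} [TopologicalSpace X]
    [TopologicalSpace Y] {f g : C(X, Y)} (F : f.Homotopy g) {x y : X} (p : Path x y)
    (hx : f x = g x) (hy : f y = g y)
    (hFx : ((F.evalAt x).cast rfl hx).Homotopic (Path.refl _))
    (hFy : ((F.evalAt y).cast rfl hy).Homotopic (Path.refl _)) :
    (p.map f.continuous).Homotopic ((p.map g.continuous).cast hx hy) :=
  .of_trans_homotopic_trans (ω₁ := (F.evalAt x).cast rfl hx) (ω₂ := (F.evalAt y).cast rfl hy)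
    ((Path.Homotopic.map_trans_evalAt F p).pathCast rfl hy) hFx hFy

theorem stmt_4_general {Y : Type*} [TopologicalSpace Y] (X : Set Y) (A : Set Y)
    (H : X × I → Y) (hHcont : Continuous H)
    (hH0 : ∀ x : X, H (x, 0) = (x : Y))
    (h : X → X) (hcont : Continuous h)
    (hh : ∀ x : X, (h x : Y) = H (x, 1))
    (hfix : ∀ x : X, (x : Y) ∈ A → h x = x)
    (x₀ : X) (hx₀ : (x₀ : Y) ∈ A)
    {a : X} (ha : (a : Y) ∈ A) (α : Path a x₀)
    (ωa : Path (a : Y) (a : Y)) (hωa : ∀ τ, ωa τ = H (a, τ))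
    (ωx₀ : Path (x₀ : Y) (x₀ : Y)) (hωx₀ : ∀ τ, ωx₀ τ = H (x₀, τ))
    (hωaNull : ωa.Homotopic (Path.refl (a : Y)))
    (hωx₀Null : ωx₀.Homotopic (Path.refl (x₀ : Y))) :
    ((α.symm.trans ((α.map hcont).cast (hfix a ha).symm (hfix x₀ hx₀).symm)).map
        continuous_subtype_val).Homotopic (Path.refl (x₀ : Y)) := by
  let F : (ContinuousMap.mk ((↑) : X → Y)).Homotopy ⟨(↑) ∘ h, by fun_prop⟩ :=
    { toFun := fun p => H (p.2, p.1)
      map_zero_left := hH0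
      map_one_left := fun x => (hh x).symm }
  have hfa : (a : Y) = h a := congrArg Subtype.val (hfix a ha).symm
  have hfx₀ : (x₀ : Y) = h x₀ := congrArg Subtype.val (hfix x₀ hx₀).symm
  have hωa' : ωa = (F.evalAt a).cast rfl hfa := Path.ext (funext hωa)
  have hωx₀' : ωx₀ = (F.evalAt x₀).cast rfl hfx₀ := Path.ext (funext hωx₀)
  have hα := F.map_homotopic_of_evalAt_null α hfa hfx₀ (hωa' ▸ hωaNull) (hωx₀' ▸ hωx₀Null)
  rw [Path.map_trans, ← Path.map_symm]
  exact (Path.Homotopic.hcomp (.refl _) hα.symm).trans (.symm_trans _)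

/-- Let `X ⊆ Y`, `A ⊆ X`, and `H : X × I → Y` continuous with `H(x,0) = x`; let
`h := H(·,1)` map `X` into `X` and fix `A` pointwise. If the trace loops at `a = α(0) ∈ A`
and at `x₀ ∈ A` are null-homotopic in `Y`, then the relative variation loop `α⁻¹·(h∘α)`,
regarded as a loop in `Y` based at `x₀`, is null-homotopic in `Y`. -/
theorem stmt_4 {Y : Type*} [TopologicalSpace Y] (X : Set Y) (A : Set Y) (hAX : A ⊆ X)
    (H : X × I → Y) (hHcont : Continuous H)
    (hH0 : ∀ x : X, H (x, 0) = (x : Y))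
    (h : X → X) (hcont : Continuous h)
    (hh : ∀ x : X, (h x : Y) = H (x, 1))
    (hfix : ∀ x : X, (x : Y) ∈ A → h x = x)
    (x₀ : X) (hx₀ : (x₀ : Y) ∈ A)
    {a : X} (ha : (a : Y) ∈ A) (α : Path a x₀)
    (ωa : Path (a : Y) (a : Y)) (hωa : ∀ τ, ωa τ = H (a, τ))
    (ωx₀ : Path (x₀ : Y) (x₀ : Y)) (hωx₀ : ∀ τ, ωx₀ τ = H (x₀, τ))
    (hωaNull : ωa.Homotopic (Path.refl (a : Y)))
    (hωx₀Null : ωx₀.Homotopic (Path.refl (x₀ : Y))) :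
    ((α.symm.trans ((α.map hcont).cast (hfix a ha).symm (hfix x₀ hx₀).symm)).map
        continuous_subtype_val).Homotopic (Path.refl (x₀ : Y)) :=
  stmt_4_general X A H hHcont hH0 h hcont hh hfix x₀ hx₀ ha α ωa hωa ωx₀ hωx₀ hωaNull hωx₀Null
end
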